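/- arXiv:1903.03311 — 2 statements merged into one kernel-verified Lean document; each statement's English description precedes it below -/
import Mathlib

section
/- For every tree T on n ≥ 2 vertices, pc_opt'(T) = n − 1 − α'(T), where pc_opt'(T) is the minimum number of edges that must be recolored (with arbitrarily many new colors) to make the monochromatic tree properly connected. -/
open SimpleGraph

/-- A walk is properly colored: no two consecutive edges share a color. -/
def ProperWalk {V : Type*} {G : SimpleGraph V} (c : Sym2 V → ℕ) {u v : V} (p : G.Walk u v) : Prop :=
  (p.edges.map c).Chain' (· ≠ ·)

/-- An edge-colored graph is properly connected. -/
def ProperlyConnected {V : Type*} (G : SimpleGraph V) (c : Sym2 V → ℕ) : Prop :=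
  ∀ u v : V, u ≠ v → ∃ p : G.Walk u v, p.IsPath ∧ ProperWalk c p

/-- Number of edges recolored away from the base color 0. -/
noncomputable def numRecolored {V : Type*} (G : SimpleGraph V) (c : Sym2 V → ℕ) : ℕ :=
  {e | e ∈ G.edgeSet ∧ c e ≠ 0}.ncard

/-- Number of new colors used. -/
noncomputable def numNewColors {V : Type*} (G : SimpleGraph V) (c : Sym2 V → ℕ) : ℕ :=
  (c '' {e | e ∈ G.edgeSet ∧ c e ≠ 0}).ncard

/-- Optimal proper connection number: minimum of p + q. -/
noncomputable def pcOpt {V : Type*} (G : SimpleGraph V) : ℕ :=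
  sInf { n | ∃ c : Sym2 V → ℕ, ProperlyConnected G c ∧
    n = numRecolored G c + numNewColors G c }

/-- Maximum matching size. -/
noncomputable def matchingNum {V : Type*} (G : SimpleGraph V) : ℕ :=
  sSup { n | ∃ M : SimpleGraph.Subgraph G, M.IsMatching ∧ n = M.edgeSet.ncard }

/-- Maximum degree. -/
noncomputable def maxDeg {V : Type*} (G : SimpleGraph V) : ℕ :=
  sSup { d | ∃ v : V, d = (G.neighborSet v).ncard }

/-- Variant counting only the number of recolored edges. -/
noncomputable def pcOpt' {V : Type*} (G : SimpleGraph V) : ℕ :=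
  sInf { p | ∃ c : Sym2 V → ℕ, ProperlyConnected G c ∧ p = numRecolored G c }


open SimpleGraph

/-!
In a tree the path between two vertices is unique, so the tree is properly connected exactly
when the coloring is a proper edge coloring. The edges keeping color 0 then form a matching, so
at least `n - 1 - α'(T)` edges must be recolored; conversely, keeping a maximum matching at color 0
and giving every other edge its own new color is a proper edge coloring.
-/

namespace SimpleGraph

variable {V : Type*} {G : SimpleGraph V}

def IsProperEdgeColoring (G : SimpleGraph V) (c : Sym2 V → ℕ) : Prop :=
  ∀ ⦃a b d : V⦄, G.Adj a b → G.Adj b d → a ≠ d → c s(a, b) ≠ c s(b, d)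

theorem IsProperEdgeColoring.properWalk_of_isPath {c : Sym2 V → ℕ}
    (hc : G.IsProperEdgeColoring c) {u v : V} (p : G.Walk u v) (hp : p.IsPath) :
    ProperWalk c p := by
  induction p with
  | nil => exact List.isChain_nil
  | @cons a b w h q ih =>
    cases q with
    | nil => exact List.isChain_singleton _
    | @cons _ x _ h' r =>
      have hax : a ≠ x := by
        rintro rfl
        exact ((Walk.cons_isPath_iff _ _).mp hp).2 (by simp)
      exact List.isChain_cons_cons.mpr ⟨hc h h' hax, ih hp.of_cons⟩

theorem Preconnected.properlyConnected_of_isProperEdgeColoring (hG : G.Preconnected)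
    {c : Sym2 V → ℕ} (hc : G.IsProperEdgeColoring c) : ProperlyConnected G c := by
  classical
  intro u v _
  obtain ⟨p⟩ := hG u v
  exact ⟨p.toPath, p.toPath.2, hc.properWalk_of_isPath _ p.toPath.2⟩

theorem IsAcyclic.isProperEdgeColoring_of_properlyConnected (hG : G.IsAcyclic)
    {c : Sym2 V → ℕ} (hc : ProperlyConnected G c) : G.IsProperEdgeColoring c := by
  intro a b d hab hbd had
  have hpath : (Walk.cons hab (Walk.cons hbd Walk.nil)).IsPath := by
    simpa [Walk.isPath_def] using ⟨⟨hab.ne, had⟩, hbd.ne⟩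
  obtain ⟨p, hp, hproper⟩ := hc a d had
  obtain rfl : p = _ := congrArg Subtype.val <|
    (hG.subsingleton_path a d).elim ⟨p, hp⟩ ⟨_, hpath⟩
  exact List.isChain_pair.mp hproper

theorem IsTree.properlyConnected_iff (hG : G.IsTree) {c : Sym2 V → ℕ} :
    ProperlyConnected G c ↔ G.IsProperEdgeColoring c :=
  ⟨hG.isAcyclic.isProperEdgeColoring_of_properlyConnected,
    hG.connected.preconnected.properlyConnected_of_isProperEdgeColoring⟩

def colorClass (G : SimpleGraph V) (c : Sym2 V → ℕ) (k : ℕ) : G.Subgraph where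
  verts := {v | ∃ w, G.Adj v w ∧ c s(v, w) = k}
  Adj v w := G.Adj v w ∧ c s(v, w) = k
  adj_sub h := h.1
  edge_vert h := ⟨_, h⟩
  symm := ⟨fun _ _ ⟨h, hk⟩ => ⟨h.symm, by rwa [Sym2.eq_swap]⟩⟩

theorem colorClass_edgeSet (c : Sym2 V → ℕ) (k : ℕ) :
    (G.colorClass c k).edgeSet = {e | e ∈ G.edgeSet ∧ c e = k} := by
  ext e
  induction e using Sym2.ind
  rfl

theorem IsProperEdgeColoring.isMatching_colorClass {c : Sym2 V → ℕ}
    (hc : G.IsProperEdgeColoring c) (k : ℕ) : (G.colorClass c k).IsMatching := by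
  rintro v ⟨w, hw, hwk⟩
  refine ⟨w, ⟨hw, hwk⟩, fun y ⟨hy, hyk⟩ => ?_⟩
  by_contra hyw
  exact hc hy.symm hw hyw (by rw [Sym2.eq_swap, hyk, hwk])

theorem numRecolored_add_ncard_colorClass_zero (hG : G.edgeSet.Finite) (c : Sym2 V → ℕ) :
    numRecolored G c + (G.colorClass c 0).edgeSet.ncard = G.edgeSet.ncard := by
  rw [numRecolored, colorClass_edgeSet, ← Set.ncard_union_eq _ (hG.subset fun _ h => h.1)
    (hG.subset fun _ h => h.1)]
  · congr 1
    ext e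
    simp only [Set.mem_union, Set.mem_ofPred_eq]
    tauto
  · exact Set.disjoint_left.mpr fun _ h h' => h.2 h'.2

open Classical in
noncomputable def Subgraph.recolorOutside (M : G.Subgraph) (f : Sym2 V → ℕ) :
    Sym2 V → ℕ :=
  fun e => if e ∈ M.edgeSet then 0 else f e + 1

theorem Subgraph.IsMatching.isProperEdgeColoring_recolorOutside {M : G.Subgraph}
    (hM : M.IsMatching) {f : Sym2 V → ℕ} (hf : f.Injective) :
    G.IsProperEdgeColoring (M.recolorOutside f) := by
  intro a b d hab hbd had
  unfold Subgraph.recolorOutside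
  split_ifs with hba hbd'
  · obtain ⟨w, -, huniq⟩ := hM (M.edge_vert (Subgraph.mem_edgeSet.mp hba).symm)
    exact (had ((huniq a (Subgraph.mem_edgeSet.mp hba).symm).trans
      (huniq d (Subgraph.mem_edgeSet.mp hbd')).symm)).elim
  · simp
  · simp
  · intro hfe
    obtain ⟨rfl, rfl⟩ | ⟨rfl, -⟩ := Sym2.eq_iff.mp (hf (Nat.succ_injective hfe)) <;> exact had rfl

theorem Subgraph.colorClass_recolorOutside_zero (M : G.Subgraph) (f : Sym2 V → ℕ) :
    (G.colorClass (M.recolorOutside f) 0).edgeSet = M.edgeSet := by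
  rw [colorClass_edgeSet]
  ext e
  simp only [Set.mem_ofPred_eq, Subgraph.recolorOutside, ite_eq_left_iff, Nat.add_one_ne_zero,
    imp_false, not_not]
  exact ⟨And.right, fun h => ⟨M.edgeSet_subset h, h⟩⟩

section Finite

variable [Finite V]

theorem bddAbove_matchingSizes (G : SimpleGraph V) :
    BddAbove {n | ∃ M : G.Subgraph, M.IsMatching ∧ n = M.edgeSet.ncard} :=
  ⟨Nat.card (Sym2 V), by rintro _ ⟨M, -, rfl⟩; exact Set.ncard_le_card _⟩

theorem Subgraph.IsMatching.ncard_edgeSet_le_matchingNum {M : G.Subgraph} (hM : M.IsMatching) :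
    M.edgeSet.ncard ≤ matchingNum G :=
  le_csSup (bddAbove_matchingSizes G) ⟨M, hM, rfl⟩

theorem exists_isMatching_ncard_edgeSet_eq_matchingNum (G : SimpleGraph V) :
    ∃ M : G.Subgraph, M.IsMatching ∧ M.edgeSet.ncard = matchingNum G := by
  have hbot : (⊥ : G.Subgraph).IsMatching := fun _ hv => hv.elim
  obtain ⟨M, hM, h⟩ : sSup {n | ∃ M : G.Subgraph, M.IsMatching ∧ n = M.edgeSet.ncard} ∈ _ :=
    Nat.sSup_mem ⟨0, ⊥, hbot, by simp⟩ (bddAbove_matchingSizes G)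
  exact ⟨M, hM, h.symm⟩

end Finite

theorem IsTree.ncard_edgeSet [Fintype V] (hG : G.IsTree) :
    G.edgeSet.ncard = Fintype.card V - 1 := by
  classical
  rw [Set.ncard_eq_toFinset_card', ← hG.card_edgeFinset, Nat.add_sub_cancel, edgeFinset]

end SimpleGraph

theorem stmt17_general {V : Type*} [Fintype V] (T : SimpleGraph V) (hT : T.IsTree) :
    pcOpt' T = Fintype.card V - 1 - matchingNum T := by
  have hE : T.edgeSet.ncard = Fintype.card V - 1 := hT.ncard_edgeSet
  have hrecolored c := numRecolored_add_ncard_colorClass_zero (G := T) (Set.toFinite _) c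
  obtain ⟨M, hM, hMcard⟩ := exists_isMatching_ncard_edgeSet_eq_matchingNum T
  obtain ⟨f, hf⟩ := Countable.exists_injective_nat (Sym2 V)
  have hopt : Fintype.card V - 1 - matchingNum T ∈
      {p | ∃ c, ProperlyConnected T c ∧ p = numRecolored T c} := by
    refine ⟨M.recolorOutside f, hT.properlyConnected_iff.mpr
      (hM.isProperEdgeColoring_recolorOutside hf), ?_⟩
    have hsplit := hrecolored (M.recolorOutside f)
    rw [M.colorClass_recolorOutside_zero] at hsplit
    omega
  refine le_antisymm (Nat.sInf_le hopt) (le_csInf ⟨_, hopt⟩ ?_)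
  rintro _ ⟨c, hc, rfl⟩
  have hzero := (hT.properlyConnected_iff.mp hc).isMatching_colorClass 0
    |>.ncard_edgeSet_le_matchingNum
  have hsplit := hrecolored c
  omega

theorem stmt17 {V : Type*} [Fintype V] (T : SimpleGraph V) (hT : T.IsTree)
    (hn : 2 ≤ Fintype.card V) :
    pcOpt' T = Fintype.card V - 1 - matchingNum T :=
  stmt17_general T hT
end

section
/- For the monochromatic complete bipartite graph K_{m,n} with m ≥ n ≥ 2 and m+n ≥ 9: pc_opt'(K_{m,n}) = 2 if n ∈ {2,3}, and pc_opt'(K_{m,n}) = 3 if n ≥ 4, where pc_opt' counts only the number of recolored edges. -/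
open SimpleGraph

/-! A properly colored path cannot contain two consecutive edges of color 0, so a proper path
with at most two recolored edges has length at most 5. Suppose at most two edges are recolored
and pick two vertices of one side that lie on no recolored edge. A proper path between them has
even length and starts and ends with edges of color 0, so it has length 4 and its two middle
edges are exactly the recolored edges: these form a star centered at a vertex of that same side.
With four vertices on one side this forces two recolored edges; with four vertices on both sides
the two recolored edges would share a vertex of each side, hence coincide.

Conversely, recoloring the path y₀ x₀ y₁ with colors 1, 2 properly connects `K_{m,n}` when
`n ≤ 3`, and recoloring the path x₁ y₀ x₀ y₁ with colors 2, 1, 2 does so for every `n`. -/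

theorem List.length_le_two_mul_countP_ne_add_one {α : Type*} [DecidableEq α] (a : α) :
    ∀ {l : List α}, l.IsChain (· ≠ ·) → l.length ≤ 2 * l.countP (· ≠ a) + 1
  | [], _ => by simp
  | [_], _ => by simp
  | x :: y :: l, h => by
    have ih := length_le_two_mul_countP_ne_add_one a (List.isChain_cons_cons.mp h).2.tail
    have hxy : x ≠ a ∨ y ≠ a := by
      by_contra! hxy
      exact (List.isChain_cons_cons.mp h).1 (hxy.1.trans hxy.2.symm)
    simp only [List.countP_cons, List.length_cons, decide_eq_true_eq]
    split_ifs <;> grind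

namespace SimpleGraph

variable {V : Type*} {G : SimpleGraph V} {c : Sym2 V → ℕ} {u v : V}

def recoloredEdges (G : SimpleGraph V) (c : Sym2 V → ℕ) : Set (Sym2 V) :=
  {e | e ∈ G.edgeSet ∧ c e ≠ 0}

theorem numRecolored_eq_ncard : numRecolored G c = (recoloredEdges G c).ncard := rfl

theorem properWalk_iff {p : G.Walk u v} : ProperWalk c p ↔ (p.edges.map c).IsChain (· ≠ ·) :=
  Iff.rfl

theorem Walk.IsPath.countP_ne_zero_le_numRecolored [Finite V] {p : G.Walk u v} (hp : p.IsPath) :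
    p.edges.countP (c · ≠ 0) ≤ numRecolored G c := by
  classical
  have hnd : (p.edges.filter (c · ≠ 0)).Nodup := hp.edges_nodup.filter _
  have hsub : ((p.edges.filter (c · ≠ 0)).toFinset : Set (Sym2 V)) ⊆ recoloredEdges G c := by
    intro e he
    simp only [List.coe_toFinset, Set.mem_ofPred_eq, List.mem_filter, decide_eq_true_eq] at he
    exact ⟨p.edges_subset_edgeSet he.1, he.2⟩
  rw [List.countP_eq_length_filter, ← List.toFinset_card_of_nodup hnd, ← Set.ncard_coe_finset]
  exact Set.ncard_le_ncard hsub

theorem Walk.IsPath.length_le_of_properWalk [Finite V] {p : G.Walk u v} (hp : p.IsPath)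
    (hw : ProperWalk c p) : p.length ≤ 2 * numRecolored G c + 1 := by
  have h := List.length_le_two_mul_countP_ne_add_one 0 hw
  rw [List.length_map, List.countP_map, p.length_edges] at h
  exact h.trans (by gcongr; exact hp.countP_ne_zero_le_numRecolored)

theorem color_eq_zero_of_mem {e : Sym2 V} (he : e ∈ G.edgeSet) (hu : u ∈ e)
    (hR : ∀ e ∈ recoloredEdges G c, u ∉ e) : c e = 0 := by
  by_contra h
  exact hR e ⟨he, h⟩ hu

theorem numRecolored_eq_two_and_getVert_two_mem [Finite V] (hR : numRecolored G c ≤ 2)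
    (hu : ∀ e ∈ recoloredEdges G c, u ∉ e) (hv : ∀ e ∈ recoloredEdges G c, v ∉ e)
    {p : G.Walk u v} (hp : p.IsPath) (hw : ProperWalk c p) (hne : p.length ≠ 0)
    (heven : Even p.length) :
    numRecolored G c = 2 ∧ ∀ e ∈ recoloredEdges G c, p.getVert 2 ∈ e := by
  have hlen := hp.length_le_of_properWalk hw
  obtain ⟨k, hk⟩ := heven
  rcases p with _ | ⟨h₁, _ | ⟨h₂, _ | ⟨h₃, _ | ⟨h₄, _ | ⟨h₅, q⟩⟩⟩⟩⟩
  · exact absurd rfl hne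
  · simp only [Walk.length_cons, Walk.length_nil] at hk; omega
  · have h₁' := color_eq_zero_of_mem (G.mem_edgeSet.mpr h₁) (Sym2.mem_mk_left _ _) hu
    have h₂' := color_eq_zero_of_mem (G.mem_edgeSet.mpr h₂) (Sym2.mem_mk_right _ _) hv
    simp [properWalk_iff, h₁', h₂'] at hw
  · simp only [Walk.length_cons, Walk.length_nil] at hk; omega
  · rename_i a w b
    have h₁' := color_eq_zero_of_mem (G.mem_edgeSet.mpr h₁) (Sym2.mem_mk_left _ _) hu
    have h₄' := color_eq_zero_of_mem (G.mem_edgeSet.mpr h₄) (Sym2.mem_mk_right _ _) hv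
    simp only [properWalk_iff, Walk.edges_cons, Walk.edges_nil, List.map_cons, List.map_nil,
      h₁', h₄', List.isChain_cons_cons, List.isChain_singleton, and_true] at hw
    have hab : a ≠ b := by
      have := hp.support_nodup
      simp only [Walk.support_cons, Walk.support_nil, List.nodup_cons, List.mem_cons] at this
      tauto
    have hedges : s(a, w) ≠ s(w, b) := by simp [hab, G.ne_of_adj h₂]
    have hsub : {s(a, w), s(w, b)} ⊆ recoloredEdges G c := by
      rintro e (rfl | rfl)
      exacts [⟨G.mem_edgeSet.mpr h₂, Ne.symm hw.1⟩, ⟨G.mem_edgeSet.mpr h₃, hw.2.2⟩]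
    have heq := Set.eq_of_subset_of_ncard_le hsub (by rwa [Set.ncard_pair hedges])
    refine ⟨by rw [numRecolored_eq_ncard, ← heq, Set.ncard_pair hedges], ?_⟩
    rw [← heq]
    simp
  · simp only [Walk.length_cons] at hk hlen; omega

theorem Coloring.ncard_setOf_mem_le [Finite V] (f : G.Coloring Bool) (b : Bool) {R : Set (Sym2 V)}
    (hR : R ⊆ G.edgeSet) : {v | f v = b ∧ ∃ e ∈ R, v ∈ e}.ncard ≤ R.ncard := by
  classical
  let g v := if h : ∃ e ∈ R, v ∈ e then h.choose else s(v, v)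
  have hg : ∀ v ∈ {v | f v = b ∧ ∃ e ∈ R, v ∈ e}, g v ∈ R ∧ v ∈ g v := fun v hv => by
    simpa only [g, dif_pos hv.2] using hv.2.choose_spec
  refine Set.ncard_le_ncard_of_injOn g (fun v hv => (hg v hv).1) ?_
  intro v hv v' hv' hgg
  by_contra hne
  have hadj : G.Adj v v' := by
    rw [← G.mem_edgeSet, ← (Sym2.mem_and_mem_iff hne).mp ⟨(hg v hv).2, hgg ▸ (hg v' hv').2⟩]
    exact hR (hg v hv).1
  exact f.valid hadj (hv.1.trans hv'.1.symm)

theorem Coloring.exists_ne_forall_notMem [Finite V] (f : G.Coloring Bool) {b : Bool}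
    {R : Set (Sym2 V)} (hR : R ⊆ G.edgeSet) (h : R.ncard + 2 ≤ {v | f v = b}.ncard) :
    ∃ u v, u ≠ v ∧ f u = b ∧ f v = b ∧ (∀ e ∈ R, u ∉ e) ∧ ∀ e ∈ R, v ∉ e := by
  have hlt : 1 < ({v | f v = b} \ {v | f v = b ∧ ∃ e ∈ R, v ∈ e}).ncard := by
    have := Set.le_ncard_sdiff {v | f v = b ∧ ∃ e ∈ R, v ∈ e} {v | f v = b}
    have := f.ncard_setOf_mem_le b hR
    omega
  obtain ⟨u, ⟨hu, hu'⟩, v, ⟨hv, hv'⟩, huv⟩ := (Set.one_lt_ncard).mp hlt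
  simp only [Set.mem_ofPred_eq, not_and, not_exists] at hu hu' hv hv'
  exact ⟨u, v, huv, hu, hv, fun e he => hu' hu e he, fun e he => hv' hv e he⟩

theorem ProperlyConnected.exists_vertex_mem_recoloredEdges [Finite V] (hc : ProperlyConnected G c)
    (f : G.Coloring Bool) {b : Bool} (hb : 4 ≤ {v | f v = b}.ncard) (hR : numRecolored G c ≤ 2) :
    numRecolored G c = 2 ∧ ∃ w, f w = b ∧ ∀ e ∈ recoloredEdges G c, w ∈ e := by
  obtain ⟨u, v, huv, hu, hv, hu', hv'⟩ :=
    f.exists_ne_forall_notMem (R := recoloredEdges G c) (b := b) (fun e he => he.1)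
      (by rw [← numRecolored_eq_ncard]; omega)
  obtain ⟨p, hp, hw⟩ := hc u v huv
  have heven : Even p.length := (f.even_length_iff_congr p).mpr (by rw [hu, hv])
  have hne : p.length ≠ 0 := fun h => huv (Walk.eq_of_length_eq_zero h)
  obtain ⟨h2, hmem⟩ := numRecolored_eq_two_and_getVert_two_mem hR hu' hv' hp hw hne heven
  have htake : Even (p.take 2).length := by
    obtain ⟨k, hk⟩ := heven
    exact ⟨1, by rw [Walk.take_length]; omega⟩
  refine ⟨h2, p.getVert 2, ?_, hmem⟩
  rw [← hu, Bool.eq_iff_iff]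
  exact ((f.even_length_iff_congr _).mp htake).symm

theorem ProperlyConnected.two_le_numRecolored [Finite V] (hc : ProperlyConnected G c)
    (f : G.Coloring Bool) {b : Bool} (hb : 4 ≤ {v | f v = b}.ncard) : 2 ≤ numRecolored G c := by
  by_contra! h
  have := (hc.exists_vertex_mem_recoloredEdges f hb (by omega)).1
  omega

theorem ProperlyConnected.three_le_numRecolored [Finite V] (hc : ProperlyConnected G c)
    (f : G.Coloring Bool) (h₀ : 4 ≤ {v | f v = false}.ncard) (h₁ : 4 ≤ {v | f v = true}.ncard) :
    3 ≤ numRecolored G c := by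
  by_contra! h
  obtain ⟨h2, w, hw, hwR⟩ := hc.exists_vertex_mem_recoloredEdges f h₀ (by omega)
  obtain ⟨-, w', hw', hw'R⟩ := hc.exists_vertex_mem_recoloredEdges f h₁ (by omega)
  have hne : w ≠ w' := by rintro rfl; simp_all
  have hsub : recoloredEdges G c ⊆ {s(w, w')} := fun e he =>
    (Sym2.mem_and_mem_iff hne).mp ⟨hwR e he, hw'R e he⟩
  have := Set.ncard_le_ncard hsub
  rw [Set.ncard_singleton, ← numRecolored_eq_ncard] at this
  omega

theorem exists_properPath_of_adj (h : G.Adj u v) : ∃ p : G.Walk u v, p.IsPath ∧ ProperWalk c p :=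
  ⟨h.toWalk, by simp [h.ne], by simp [properWalk_iff]⟩

theorem exists_properPath_two {a : V} (h₁ : G.Adj u a) (h₂ : G.Adj a v) (huv : u ≠ v)
    (hc : c s(u, a) ≠ c s(a, v)) : ∃ p : G.Walk u v, p.IsPath ∧ ProperWalk c p :=
  ⟨.cons h₁ (.cons h₂ .nil), by simp [Walk.isPath_def, huv, h₁.ne, h₂.ne],
    by simpa [properWalk_iff]⟩

theorem exists_properPath_four {a w b : V} (h₁ : G.Adj u a) (h₂ : G.Adj a w) (h₃ : G.Adj w b)
    (h₄ : G.Adj b v) (hnd : [u, a, w, b, v].Nodup) (hc₁ : c s(u, a) ≠ c s(a, w))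
    (hc₂ : c s(a, w) ≠ c s(w, b)) (hc₃ : c s(w, b) ≠ c s(b, v)) :
    ∃ p : G.Walk u v, p.IsPath ∧ ProperWalk c p :=
  ⟨.cons h₁ (.cons h₂ (.cons h₃ (.cons h₄ .nil))), by simpa [Walk.isPath_def] using hnd,
    by simp [properWalk_iff, hc₁, hc₂, hc₃]⟩

theorem pcOpt'_eq (hc : ProperlyConnected G c) {k : ℕ} (hk : numRecolored G c = k)
    (hmin : ∀ c, ProperlyConnected G c → k ≤ numRecolored G c) : pcOpt' G = k :=
  IsLeast.csInf_eq ⟨⟨c, hc, hk.symm⟩, by rintro _ ⟨c', hc', rfl⟩; exact hmin c' hc'⟩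

section CompleteBipartite

open Sum

variable {α β : Type*}

@[simp]
theorem bicoloring_apply (v : α ⊕ β) : CompleteBipartiteGraph.bicoloring α β v = v.isRight := rfl

theorem ncard_bicoloring_eq_false :
    {v | CompleteBipartiteGraph.bicoloring α β v = false}.ncard = Nat.card α := by
  rw [← Set.ncard_range_of_injective inl_injective]
  congr
  ext (a | b) <;> simp

theorem ncard_bicoloring_eq_true :
    {v | CompleteBipartiteGraph.bicoloring α β v = true}.ncard = Nat.card β := by
  rw [← Set.ncard_range_of_injective inr_injective]
  congr
  ext (a | b) <;> simp

variable [DecidableEq α] [DecidableEq β] {x₀ x₁ : α} {y₀ y₁ : β}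

/-- Colors the path `x₁ y₀ x₀ y₁` with `2, 1, 2` and every other edge with `0`; for `x₁ = x₀` the
recolored edges are just the path `y₀ x₀ y₁`, colored `1, 2`. -/
def pathColoring (x₀ x₁ : α) (y₀ y₁ : β) (e : Sym2 (α ⊕ β)) : ℕ :=
  if e = s(inl x₀, inr y₀) then 1
  else if e = s(inl x₀, inr y₁) ∨ e = s(inl x₁, inr y₀) then 2 else 0

@[simp]
theorem pathColoring_inl_inr (a : α) (b : β) :
    pathColoring x₀ x₁ y₀ y₁ s(inl a, inr b) =
      if a = x₀ ∧ b = y₀ then 1 else if a = x₀ ∧ b = y₁ ∨ a = x₁ ∧ b = y₀ then 2 else 0 := by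
  simp [pathColoring]

@[simp]
theorem pathColoring_inr_inl (a : α) (b : β) :
    pathColoring x₀ x₁ y₀ y₁ s(inr b, inl a) = pathColoring x₀ x₁ y₀ y₁ s(inl a, inr b) := by
  rw [Sym2.eq_swap]

theorem recoloredEdges_pathColoring (x₀ x₁ : α) (y₀ y₁ : β) :
    recoloredEdges (completeBipartiteGraph α β) (pathColoring x₀ x₁ y₀ y₁) =
      {s(inl x₀, inr y₀), s(inl x₀, inr y₁), s(inl x₁, inr y₀)} := by
  ext e
  induction e using Sym2.ind with
  | _ u v =>
    rcases u with a | b <;> rcases v with a' | b' <;>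
      simp [recoloredEdges, pathColoring] <;> grind

theorem exists_properPath_pathColoring_inl_inl (hy : y₀ ≠ y₁) {a a' : α} (ha : a ≠ a') :
    ∃ p : (completeBipartiteGraph α β).Walk (inl a) (inl a'),
      p.IsPath ∧ ProperWalk (pathColoring x₀ x₁ y₀ y₁) p := by
  by_cases hc :
      pathColoring x₀ x₁ y₀ y₁ s(inl a, inr y₀) = pathColoring x₀ x₁ y₀ y₁ s(inr y₀, inl a')
  · obtain ⟨ha₀, ha₁, ha₀'⟩ : a ≠ x₀ ∧ a ≠ x₁ ∧ a' ≠ x₀ := by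
      simp only [pathColoring_inl_inr, pathColoring_inr_inl] at hc
      split_ifs at hc <;> grind
    exact exists_properPath_four (a := inr y₀) (w := inl x₀) (b := inr y₁) (by simp) (by simp)
      (by simp) (by simp) (by simp [ha, ha₀, ha₀'.symm, hy]) (by simp [ha₀, ha₁])
      (by simp [hy.symm]) (by simp [ha₀', hy.symm])
  · exact exists_properPath_two (a := inr y₀) (by simp) (by simp) (by simpa) hc

theorem exists_properPath_pathColoring_inr_inr
    (h : x₀ ≠ x₁ ∨ ({y₀, y₁}ᶜ : Set β).Subsingleton) {b b' : β} (hb : b ≠ b') :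
    ∃ p : (completeBipartiteGraph α β).Walk (inr b) (inr b'),
      p.IsPath ∧ ProperWalk (pathColoring x₀ x₁ y₀ y₁) p := by
  by_cases hc :
      pathColoring x₀ x₁ y₀ y₁ s(inr b, inl x₀) = pathColoring x₀ x₁ y₀ y₁ s(inl x₀, inr b')
  · obtain ⟨hb₀, hb₁, hb₀', hb₁'⟩ : b ≠ y₀ ∧ b ≠ y₁ ∧ b' ≠ y₀ ∧ b' ≠ y₁ := by
      simp only [pathColoring_inl_inr, pathColoring_inr_inl] at hc
      split_ifs at hc <;> grind
    have hx : x₀ ≠ x₁ :=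
      h.resolve_right fun hs => hb (hs (by simp [hb₀, hb₁]) (by simp [hb₀', hb₁']))
    exact exists_properPath_four (a := inl x₀) (w := inr y₀) (b := inl x₁) (by simp) (by simp)
      (by simp) (by simp) (by simp [hb, hb₀, hb₀'.symm, hx]) (by simp [hb₀, hb₁])
      (by simp [hx.symm]) (by simp [hx.symm, hb₀'])
  · exact exists_properPath_two (a := inl x₀) (by simp) (by simp) (by simpa) hc

theorem properlyConnected_pathColoring (hy : y₀ ≠ y₁)
    (h : x₀ ≠ x₁ ∨ ({y₀, y₁}ᶜ : Set β).Subsingleton) :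
    ProperlyConnected (completeBipartiteGraph α β) (pathColoring x₀ x₁ y₀ y₁) := by
  rintro (a | b) (a' | b') huv
  · exact exists_properPath_pathColoring_inl_inl hy (by simpa using huv)
  · exact exists_properPath_of_adj (by simp)
  · exact exists_properPath_of_adj (by simp)
  · exact exists_properPath_pathColoring_inr_inr h (by simpa using huv)

theorem numRecolored_pathColoring_self (x₀ : α) (hy : y₀ ≠ y₁) :
    numRecolored (completeBipartiteGraph α β) (pathColoring x₀ x₀ y₀ y₁) = 2 := by
  rw [numRecolored_eq_ncard, recoloredEdges_pathColoring, Set.ncard_eq_two]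
  exact ⟨s(inl x₀, inr y₀), s(inl x₀, inr y₁), by simp [hy], by ext; simp; tauto⟩

theorem numRecolored_pathColoring (hx : x₀ ≠ x₁) (hy : y₀ ≠ y₁) :
    numRecolored (completeBipartiteGraph α β) (pathColoring x₀ x₁ y₀ y₁) = 3 := by
  rw [numRecolored_eq_ncard, recoloredEdges_pathColoring, Set.ncard_eq_three]
  exact ⟨_, _, _, by simp [hy], by simp [hx], by simp [hx], rfl⟩

end CompleteBipartite

end SimpleGraph

theorem stmt18 (m n : ℕ) (hmn : n ≤ m) (hn : 2 ≤ n) (h9 : 9 ≤ m + n) :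
    (n ≤ 3 → pcOpt' (completeBipartiteGraph (Fin m) (Fin n)) = 2) ∧
    (4 ≤ n → pcOpt' (completeBipartiteGraph (Fin m) (Fin n)) = 3) := by
  let f := CompleteBipartiteGraph.bicoloring (Fin m) (Fin n)
  have hleft : 4 ≤ {v | f v = false}.ncard := by
    rw [ncard_bicoloring_eq_false, Nat.card_eq_fintype_card, Fintype.card_fin]; omega
  have hy : (⟨0, by omega⟩ : Fin n) ≠ ⟨1, by omega⟩ := by simp
  refine ⟨fun hn3 => ?_, fun hn4 => ?_⟩
  · have hsub : ({⟨0, by omega⟩, ⟨1, by omega⟩}ᶜ : Set (Fin n)).Subsingleton := by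
      intro b hb b' hb'
      simp only [Set.mem_compl_iff, Set.mem_insert_iff, Set.mem_singleton_iff, Fin.ext_iff]
        at hb hb'
      omega
    exact pcOpt'_eq (properlyConnected_pathColoring (x₀ := ⟨0, by omega⟩) hy (.inr hsub))
      (numRecolored_pathColoring_self _ hy) fun c hc => hc.two_le_numRecolored f hleft
  · have hright : 4 ≤ {v | f v = true}.ncard := by
      rw [ncard_bicoloring_eq_true, Nat.card_eq_fintype_card, Fintype.card_fin]; omega
    have hx : (⟨0, by omega⟩ : Fin m) ≠ ⟨1, by omega⟩ := by simp
    exact pcOpt'_eq (properlyConnected_pathColoring hy (.inl hx))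
      (numRecolored_pathColoring hx hy) fun c hc => hc.three_le_numRecolored f hleft hright
end
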